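/- Let d ≥ 2 and p ≥ 2 be integers with p(d−2) < d, and let p_t(x) = (2πt)^{−d/2} exp(−|x|²/(2t)) be the d-dimensional heat kernel. Then ∫_{ℝ^d} (∫_0^∞ e^{-t} p_t(x) dt)^p dx ≤ (2π)^{−d(p−1)/2} p^{−d/2} (∫_0^∞ t^{−d(p−1)/(2p)} e^{-t} dt)^p < ∞. -/

import Mathlib

/-!
Minkowski's integral inequality moves the `L^p` norm inside the time integral:
`‖∫ e^{-t} p_t dt‖_p ≤ ∫ e^{-t} ‖p_t‖_p dt`. A Gaussian integral gives
`‖p_t‖_p^p = (2πt)^{-d(p-1)/2} p^{-d/2}`, so the right-hand side is a Gamma-type integral of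
`t^{-d(p-1)/(2p)} e^{-t}`, which converges because `d(p-1)/(2p) < 1` is equivalent to `p(d-2) < d`.
-/

open MeasureTheory ENNReal Set Function

section Minkowski

variable {α β : Type*} [MeasurableSpace α] [MeasurableSpace β] {μ : Measure α} {ν : Measure β}
  {p : ℝ}

/-- Hölder's inequality for `g = (g c^{-1/q}) · c^{1/q}`, `q` the conjugate exponent of `p`. -/
theorem lintegral_rpow_le_lintegral_mul_rpow_of_weight (hp : 1 < p) {g c : α → ℝ≥0∞}
    (hg : AEMeasurable g μ) (hc : AEMeasurable c μ) (hc0 : ∀ᵐ t ∂μ, c t ≠ 0)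
    (hctop : ∀ᵐ t ∂μ, c t ≠ ⊤) :
    (∫⁻ t, g t ∂μ) ^ p ≤ (∫⁻ t, g t ^ p * c t ^ (1 - p) ∂μ) * (∫⁻ t, c t ∂μ) ^ (p - 1) := by
  set q := p.conjExponent
  have hpq : p.HolderConjugate q := .conjExponent hp
  have hp0 : 0 < p := zero_lt_one.trans hp
  have hqp : q⁻¹ * p = p - 1 := by
    rw [show q⁻¹ = 1 - p⁻¹ by linarith [hpq.inv_add_inv_eq_one]]
    field_simp
  have hsplit : ∫⁻ t, g t ∂μ = ∫⁻ t, (g t * c t ^ (-q⁻¹)) * c t ^ q⁻¹ ∂μ := by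
    refine lintegral_congr_ae ?_
    filter_upwards [hc0, hctop] with t h0 htop
    rw [mul_assoc, ← rpow_add _ _ h0 htop, neg_add_cancel, rpow_zero, mul_one]
  have hHolder := ENNReal.lintegral_mul_le_Lp_mul_Lq μ hpq (hg.mul (hc.pow_const (-q⁻¹)))
    (hc.pow_const q⁻¹)
  simp only [Pi.mul_apply, ← hsplit, one_div] at hHolder
  calc (∫⁻ t, g t ∂μ) ^ p
      ≤ ((∫⁻ t, (g t * c t ^ (-q⁻¹)) ^ p ∂μ) ^ p⁻¹ * (∫⁻ t, (c t ^ q⁻¹) ^ q ∂μ) ^ q⁻¹) ^ p :=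
        rpow_le_rpow hHolder hp0.le
    _ = (∫⁻ t, g t ^ p * c t ^ (1 - p) ∂μ) * (∫⁻ t, c t ∂μ) ^ (p - 1) := by
        rw [ENNReal.mul_rpow_of_nonneg _ _ hp0.le, ← ENNReal.rpow_mul, ← ENNReal.rpow_mul,
          inv_mul_cancel₀ hp0.ne', ENNReal.rpow_one, hqp]
        congr 2
        · ext t
          rw [ENNReal.mul_rpow_of_nonneg _ _ hp0.le, ← ENNReal.rpow_mul, neg_mul, hqp, neg_sub]
        · refine lintegral_congr fun t => ?_
          rw [← ENNReal.rpow_mul, inv_mul_cancel₀ hpq.symm.ne_zero, ENNReal.rpow_one]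

/-- Minkowski's integral inequality `‖∫ f t dμ‖_{L^p(ν)} ≤ ∫ c t dμ` for `‖f t‖_{L^p(ν)} ≤ c t`. -/
theorem lintegral_rpow_lintegral_le [SFinite μ] [SFinite ν] (hp : 1 < p) {f : α → β → ℝ≥0∞}
    (hf : Measurable (uncurry f)) {c : α → ℝ≥0∞} (hc : AEMeasurable c μ)
    (hc0 : ∀ᵐ t ∂μ, c t ≠ 0) (hctop : ∀ᵐ t ∂μ, c t ≠ ⊤)
    (hfc : ∀ᵐ t ∂μ, ∫⁻ x, f t x ^ p ∂ν ≤ c t ^ p) :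
    ∫⁻ x, (∫⁻ t, f t x ∂μ) ^ p ∂ν ≤ (∫⁻ t, c t ∂μ) ^ p := by
  have hp0 : 0 < p := zero_lt_one.trans hp
  set B := ∫⁻ t, c t ∂μ
  rcases eq_or_ne B ⊤ with hB | hB
  · simp [hB, ENNReal.top_rpow_of_pos hp0]
  have hswap : AEMeasurable (uncurry fun x t => f t x ^ p * c t ^ (1 - p)) (ν.prod μ) :=
    ((hf.comp measurable_swap).pow_const p).aemeasurable.mul (hc.pow_const _).comp_snd
  calc ∫⁻ x, (∫⁻ t, f t x ∂μ) ^ p ∂ν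
      ≤ ∫⁻ x, (∫⁻ t, f t x ^ p * c t ^ (1 - p) ∂μ) * B ^ (p - 1) ∂ν :=
        lintegral_mono fun x => lintegral_rpow_le_lintegral_mul_rpow_of_weight hp
          hf.of_uncurry_right.aemeasurable hc hc0 hctop
    _ = (∫⁻ t, c t ^ (1 - p) * ∫⁻ x, f t x ^ p ∂ν ∂μ) * B ^ (p - 1) := by
        rw [lintegral_mul_const' _ _ (ENNReal.rpow_ne_top_of_nonneg (by linarith) hB),
          lintegral_lintegral_swap hswap]
        congr 1
        refine lintegral_congr fun t => ?_
        rw [lintegral_mul_const'' _ (hf.of_uncurry_left.pow_const p).aemeasurable, mul_comm]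
    _ ≤ (∫⁻ t, c t ^ (1 - p) * c t ^ p ∂μ) * B ^ (p - 1) := by
        gcongr ?_ * _
        exact lintegral_mono_ae (hfc.mono fun t ht => by gcongr)
    _ = B * B ^ (p - 1) := by
        congr 1
        refine lintegral_congr_ae ?_
        filter_upwards [hc0, hctop] with t h0 htop
        rw [← ENNReal.rpow_add _ _ h0 htop, sub_add_cancel, ENNReal.rpow_one]
    _ = B ^ p := by
        conv_rhs => rw [← add_sub_cancel 1 p,
          ENNReal.rpow_add_of_nonneg _ _ zero_le_one (by linarith), ENNReal.rpow_one]

end Minkowski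

open Real

section Gaussian

variable {V : Type*} [NormedAddCommGroup V] [InnerProductSpace ℝ V] [FiniteDimensional ℝ V]
  [MeasurableSpace V] [BorelSpace V]

theorem lintegral_ofReal_exp_neg_mul_norm_sq {b : ℝ} (hb : 0 < b) :
    ∫⁻ v : V, ENNReal.ofReal (exp (-b * ‖v‖ ^ 2))
      = ENNReal.ofReal ((π / b) ^ (Module.finrank ℝ V / 2 : ℝ)) := by
  have hint : Integrable fun v : V => exp (-b * ‖v‖ ^ 2) := by
    refine (GaussianFourier.integrable_cexp_neg_mul_sq_norm_add (V := V)
      (b := (b : ℂ)) (by simpa using hb) 0 0).norm.congr (.of_forall fun v => ?_)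
    simp [Complex.norm_exp, ← Complex.ofReal_pow]
  rw [← ofReal_integral_eq_lintegral_ofReal hint (.of_forall fun v => (exp_pos _).le),
    GaussianFourier.integral_rexp_neg_mul_sq_norm hb]

theorem lintegral_ofReal_mul_exp_neg_norm_sq_div_rpow {a t r : ℝ} (ha : 0 ≤ a) (ht : 0 < t)
    (hr : 0 < r) :
    ∫⁻ v : V, ENNReal.ofReal (a * exp (-(‖v‖ ^ 2) / (2 * t))) ^ r
      = ENNReal.ofReal (a ^ r * (2 * π * t / r) ^ (Module.finrank ℝ V / 2 : ℝ)) := by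
  have hslice (v : V) : ENNReal.ofReal (a * exp (-(‖v‖ ^ 2) / (2 * t))) ^ r
      = ENNReal.ofReal (a ^ r) * ENNReal.ofReal (exp (-(r / (2 * t)) * ‖v‖ ^ 2)) := by
    rw [ENNReal.ofReal_rpow_of_nonneg (by positivity) hr.le, mul_rpow ha (exp_pos _).le,
      ← exp_mul, ENNReal.ofReal_mul (rpow_nonneg ha r)]
    congr 3
    field_simp
  rw [lintegral_congr hslice, lintegral_const_mul' _ _ ENNReal.ofReal_ne_top,
    lintegral_ofReal_exp_neg_mul_norm_sq (by positivity), ← ENNReal.ofReal_mul (by positivity)]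
  congr 3
  field_simp

end Gaussian

theorem rpow_heatKernel_identity {d r t : ℝ} (hr : 0 < r) (ht : 0 < t) :
    (exp (-t) * (2 * π * t) ^ (-d / 2)) ^ r * (2 * π * t / r) ^ (d / 2)
      = (2 * π) ^ (-(d * (r - 1)) / 2) * r ^ (-d / 2) *
          (t ^ (-(d * (r - 1)) / (2 * r)) * exp (-t)) ^ r := by
  have h2π : 0 < 2 * π := by positivity
  rw [mul_rpow (exp_pos _).le (by positivity), mul_rpow (by positivity) (exp_pos _).le,
    div_rpow (by positivity) hr.le, ← rpow_mul (by positivity), ← rpow_mul ht.le,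
    mul_rpow h2π.le ht.le, mul_rpow h2π.le ht.le]
  have er : r ^ (-d / 2) = (r ^ (d / 2))⁻¹ := by rw [neg_div, rpow_neg hr.le]
  have e2π : (2 * π) ^ (-(d * (r - 1)) / 2) = (2 * π) ^ (-d / 2 * r) * (2 * π) ^ (d / 2) := by
    rw [← rpow_add h2π]; ring_nf
  have et : t ^ (-(d * (r - 1)) / (2 * r) * r) = t ^ (-d / 2 * r) * t ^ (d / 2) := by
    rw [← rpow_add ht]; congr 1; field_simp; ring
  rw [e2π, et, er]
  ring

theorem rpow_inv_mul_rpow {a b r : ℝ} (ha : 0 ≤ a) (hb : 0 ≤ b) (hr : r ≠ 0) :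
    (a ^ r⁻¹ * b) ^ r = a * b ^ r := by
  rw [mul_rpow (rpow_nonneg ha _) hb, rpow_inv_rpow ha hr]

/-- `‖e^{-t} p_t‖_{L^r(ℝ^d)}` for the heat kernel `p_t`. -/
noncomputable def resolventSliceNorm (d : ℕ) (r t : ℝ) : ℝ :=
  ((2 * π) ^ (-((d : ℝ) * (r - 1)) / 2) * r ^ (-(d : ℝ) / 2)) ^ r⁻¹ *
    (t ^ (-((d : ℝ) * (r - 1)) / (2 * r)) * exp (-t))

theorem resolventSliceNorm_pos (d : ℕ) {r t : ℝ} (hr : 0 < r) (ht : 0 < t) :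
    0 < resolventSliceNorm d r t := by
  unfold resolventSliceNorm; positivity

theorem lintegral_ofReal_resolventIntegrand_rpow (d : ℕ) {r t : ℝ} (hr : 0 < r) (ht : 0 < t) :
    ∫⁻ x : EuclideanSpace ℝ (Fin d),
        ENNReal.ofReal (exp (-t) * (2 * π * t) ^ (-(d : ℝ) / 2) * exp (-(‖x‖ ^ 2) / (2 * t))) ^ r
      = ENNReal.ofReal (resolventSliceNorm d r t) ^ r := by
  rw [lintegral_ofReal_mul_exp_neg_norm_sq_div_rpow (by positivity) ht hr,
    finrank_euclideanSpace_fin, rpow_heatKernel_identity hr ht,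
    ENNReal.ofReal_rpow_of_nonneg (resolventSliceNorm_pos d hr ht).le hr.le, resolventSliceNorm,
    rpow_inv_mul_rpow (by positivity) (by positivity) hr.ne']

theorem neg_one_lt_heatKernel_exponent {d p : ℕ} (hp : 0 < p) (hdp : p * (d - 2) < d) :
    -1 < -((d : ℝ) * ((p : ℝ) - 1)) / (2 * p) := by
  rw [neg_div, neg_lt_neg_iff, div_lt_one (by positivity)]
  rcases le_or_gt 2 d with hd | hd
  · have h : ((p * (d - 2) : ℕ) : ℝ) < d := by exact_mod_cast hdp
    rw [Nat.cast_mul, Nat.cast_sub hd] at h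
    push_cast at h
    linarith
  · have hd1 : (d : ℝ) ≤ 1 := by exact_mod_cast Nat.lt_succ_iff.mp hd
    have hp1 : (1 : ℝ) ≤ p := by exact_mod_cast hp
    nlinarith

theorem setLIntegral_ofReal_resolventSliceNorm (d : ℕ) {r : ℝ} (hr : 0 < r)
    (hα : -1 < -((d : ℝ) * (r - 1)) / (2 * r)) :
    ∫⁻ t in Ioi (0 : ℝ), ENNReal.ofReal (resolventSliceNorm d r t)
      = ENNReal.ofReal (((2 * π) ^ (-((d : ℝ) * (r - 1)) / 2) * r ^ (-(d : ℝ) / 2)) ^ r⁻¹ *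
          ∫ t in Ioi (0 : ℝ), t ^ (-((d : ℝ) * (r - 1)) / (2 * r)) * exp (-t)) := by
  have hint := integrableOn_rpow_mul_exp_neg_rpow hα zero_lt_one
  simp only [Real.rpow_one] at hint
  rw [← integral_const_mul, ofReal_integral_eq_lintegral_ofReal (hint.const_mul _)]
  · rfl
  · exact (ae_restrict_iff' measurableSet_Ioi).2 (.of_forall fun t (ht : 0 < t) =>
      (resolventSliceNorm_pos d hr ht).le)

theorem heat_kernel_resolvent_Lp_bound_general (d p : ℕ) (hp : 2 ≤ p)
    (hdp : p * (d - 2) < d) :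
    (∫⁻ x : EuclideanSpace ℝ (Fin d),
        (∫⁻ t in Set.Ioi (0 : ℝ), ENNReal.ofReal
          (Real.exp (-t) * (2 * Real.pi * t) ^ (-(d : ℝ) / 2) *
            Real.exp (-(‖x‖ ^ 2) / (2 * t)))) ^ p)
      ≤ ENNReal.ofReal ((2 * Real.pi) ^ (-((d : ℝ) * ((p : ℝ) - 1)) / 2) *
          (p : ℝ) ^ (-(d : ℝ) / 2) *
          (∫ t in Set.Ioi (0 : ℝ),
            t ^ (-((d : ℝ) * ((p : ℝ) - 1)) / (2 * p)) * Real.exp (-t)) ^ p) ∧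
    (∫⁻ x : EuclideanSpace ℝ (Fin d),
        (∫⁻ t in Set.Ioi (0 : ℝ), ENNReal.ofReal
          (Real.exp (-t) * (2 * Real.pi * t) ^ (-(d : ℝ) / 2) *
            Real.exp (-(‖x‖ ^ 2) / (2 * t)))) ^ p) < ⊤ := by
  have hp1 : (1 : ℝ) < p := by exact_mod_cast hp
  have hbound := lintegral_rpow_lintegral_le (μ := volume.restrict (Ioi 0)) (ν := volume) hp1
    (f := fun t (x : EuclideanSpace ℝ (Fin d)) => ENNReal.ofReal
      (exp (-t) * (2 * π * t) ^ (-(d : ℝ) / 2) * exp (-(‖x‖ ^ 2) / (2 * t))))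
    (by fun_prop) (c := fun t => ENNReal.ofReal (resolventSliceNorm d p t))
    (by unfold resolventSliceNorm; fun_prop)
    ((ae_restrict_iff' measurableSet_Ioi).2 (.of_forall fun t (ht : 0 < t) =>
      (ENNReal.ofReal_pos.2 (resolventSliceNorm_pos d (by positivity) ht)).ne'))
    (.of_forall fun t => ENNReal.ofReal_ne_top)
    ((ae_restrict_iff' measurableSet_Ioi).2 (.of_forall fun t (ht : 0 < t) =>
      (lintegral_ofReal_resolventIntegrand_rpow d (by positivity) ht).le))
  have hI : 0 ≤ ∫ t in Ioi (0 : ℝ), t ^ (-((d : ℝ) * ((p : ℝ) - 1)) / (2 * p)) * exp (-t) :=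
    setIntegral_nonneg measurableSet_Ioi fun t (ht : 0 < t) =>
      mul_nonneg (rpow_nonneg ht.le _) (exp_pos _).le
  rw [setLIntegral_ofReal_resolventSliceNorm d (by positivity)
      (neg_one_lt_heatKernel_exponent (by omega) hdp),
    ENNReal.ofReal_rpow_of_nonneg (by positivity) (by positivity),
    rpow_inv_mul_rpow (by positivity) hI (by positivity)] at hbound
  simp only [ENNReal.rpow_natCast, Real.rpow_natCast] at hbound
  exact ⟨hbound, hbound.trans_lt ENNReal.ofReal_lt_top⟩

/-- For `d ≥ 2`, `p ≥ 2` with `p(d−2) < d`, and the `d`-dimensional heat kernel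
`p_t(x) = (2πt)^{−d/2} exp(−|x|²/(2t))`, one has
`∫ (∫_0^∞ e^{-t} p_t(x) dt)^p dx ≤ (2π)^{−d(p−1)/2} p^{−d/2}
  (∫_0^∞ t^{−d(p−1)/(2p)} e^{-t} dt)^p < ∞`. -/
theorem heat_kernel_resolvent_Lp_bound (d p : ℕ) (hd : 2 ≤ d) (hp : 2 ≤ p)
    (hdp : p * (d - 2) < d) :
    (∫⁻ x : EuclideanSpace ℝ (Fin d),
        (∫⁻ t in Set.Ioi (0 : ℝ), ENNReal.ofReal
          (Real.exp (-t) * (2 * Real.pi * t) ^ (-(d : ℝ) / 2) *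
            Real.exp (-(‖x‖ ^ 2) / (2 * t)))) ^ p)
      ≤ ENNReal.ofReal ((2 * Real.pi) ^ (-((d : ℝ) * ((p : ℝ) - 1)) / 2) *
          (p : ℝ) ^ (-(d : ℝ) / 2) *
          (∫ t in Set.Ioi (0 : ℝ),
            t ^ (-((d : ℝ) * ((p : ℝ) - 1)) / (2 * p)) * Real.exp (-t)) ^ p) ∧
    (∫⁻ x : EuclideanSpace ℝ (Fin d),
        (∫⁻ t in Set.Ioi (0 : ℝ), ENNReal.ofReal
          (Real.exp (-t) * (2 * Real.pi * t) ^ (-(d : ℝ) / 2) *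
            Real.exp (-(‖x‖ ^ 2) / (2 * t)))) ^ p) < ⊤ :=
  heat_kernel_resolvent_Lp_bound_general d p hp hdp
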